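/- Let d ≥ 1, let c ≥ d be a real number, define v(x) = 1 − |x|² and b(x) = −c x/|x|² for x ≠ 0. Then: (i) for every x ∈ B_1 with x ≠ 0, Δv(x) + b(x)·∇v(x) = −2d + 2c ≥ 0; (ii) v = 0 on ∂B_1 and v(0) = 1 > 0. Consequently, for L = Δ + b·D, the negative part (Lv)_− vanishes on B_1 \ {0}, so for every constant N and every p ∈ [1,∞) the Aleksandrov-type inequality v(x) ≤ sup_{∂B_1} v + N (∫_{B_1} ((Lv(y))_−)^p dy)^{1/p} fails at x = 0. -/

import Mathlib

open MeasureTheory Metric RealInnerProductSpace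

/-!
Since `Δ(1 - |x|²) = -2d` and `∇(1 - |x|²) = -2x`, the radial drift `-c x/|x|²` contributes
`+2c` everywhere off the origin, so `Lv = 2(c - d) ≥ 0` on `B_1 \ {0}`. Hence `(Lv)_-` vanishes
outside a null set and the right-hand side of the Aleksandrov inequality at `x = 0` is at most
`sup_{∂B_1} v = 0`, while `v(0) = 1`.
-/

section OneSubNormSq

variable {E : Type*} [NormedAddCommGroup E] [InnerProductSpace ℝ E]

theorem hasFDerivAt_one_sub_norm_sq (x : E) :
    HasFDerivAt (fun x : E => 1 - ‖x‖ ^ 2) ((-2 : ℝ) • innerSL ℝ x) x := by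
  simpa [neg_smul, two_smul] using (hasStrictFDerivAt_norm_sq x).hasFDerivAt.const_sub (1 : ℝ)

theorem fderiv_one_sub_norm_sq :
    fderiv ℝ (fun x : E => 1 - ‖x‖ ^ 2) = (-2 : ℝ) • innerSL ℝ :=
  funext fun x => (hasFDerivAt_one_sub_norm_sq x).fderiv

theorem iteratedFDeriv_two_one_sub_norm_sq_apply_diag (x e : E) :
    iteratedFDeriv ℝ 2 (fun x : E => 1 - ‖x‖ ^ 2) x ![e, e] = -2 * ‖e‖ ^ 2 := by
  rw [iteratedFDeriv_two_apply, fderiv_one_sub_norm_sq, ContinuousLinearMap.fderiv]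
  simp only [smul_apply, Matrix.cons_val_zero, Matrix.cons_val_one, smul_eq_mul]
  rw [innerSL_apply_apply ℝ, real_inner_self_eq_norm_sq]

theorem gradient_one_sub_norm_sq [CompleteSpace E] (x : E) :
    gradient (fun x : E => 1 - ‖x‖ ^ 2) x = (-2 : ℝ) • x := by
  refine HasGradientAt.gradient ?_
  rw [hasGradientAt_iff_hasFDerivAt, map_smul]
  exact hasFDerivAt_one_sub_norm_sq x

theorem inner_neg_div_norm_sq_smul_smul_self {x : E} (hx : x ≠ 0) (a c : ℝ) :
    ⟪-((c / ‖x‖ ^ 2) • x), a • x⟫ = -(a * c) := by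
  rw [inner_neg_left, real_inner_smul_left, real_inner_smul_right, real_inner_self_eq_norm_sq]
  field_simp [norm_ne_zero_iff.2 hx]

end OneSubNormSq

theorem sum_iteratedFDeriv_two_one_sub_norm_sq_single {ι : Type*} [Fintype ι] [DecidableEq ι]
    (x : EuclideanSpace ℝ ι) :
    ∑ i, iteratedFDeriv ℝ 2 (fun x : EuclideanSpace ℝ ι => 1 - ‖x‖ ^ 2) x
      ![EuclideanSpace.single i 1, EuclideanSpace.single i 1] = (-2 : ℝ) * Fintype.card ι := by
  simp [iteratedFDeriv_two_one_sub_norm_sq_apply_diag, mul_comm]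

theorem setIntegral_eq_zero_of_forall_ne {α : Type*} [MeasurableSpace α]
    {μ : Measure α} [NullSingletonClass μ] {s : Set α} {f : α → ℝ} (a : α)
    (hf : ∀ x ∈ s, x ≠ a → f x = 0) : ∫ x in s, f x ∂μ = 0 := by
  rw [← setIntegral_congr_set (sdiff_null_ae_eq_self (measure_singleton a))]
  exact setIntegral_eq_zero_of_forall_eq_zero fun x hx => hf x hx.1 hx.2

/-- counterexample of Remark 1.1. For `v(x) = 1 - |x|²`,
`b(x) = -c x/|x|²` with `c ≥ d`, and `Lv = Δv + b·∇v`, one has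
`Lv = -2d + 2c ≥ 0` on `B_1 \ {0}`, `v = 0` on `∂B_1`, `v(0) = 1 > 0`,
`(Lv)_-` vanishes on `B_1 \ {0}`, and the Aleksandrov-type inequality
fails at `x = 0` for every `N` and every `p ∈ [1,∞)`. -/
theorem aleksandrov_fails_without_smallness (d : ℕ) (hd : 1 ≤ d) (c : ℝ)
    (hc : (d : ℝ) ≤ c)
    (v : EuclideanSpace ℝ (Fin d) → ℝ) (hv : v = fun x => 1 - ‖x‖ ^ 2)
    (b : EuclideanSpace ℝ (Fin d) → EuclideanSpace ℝ (Fin d))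
    (hb : ∀ y : EuclideanSpace ℝ (Fin d), y ≠ 0 → b y = -((c / ‖y‖ ^ 2) • y))
    (Lv : EuclideanSpace ℝ (Fin d) → ℝ)
    (hLv : Lv = fun y =>
      (∑ i : Fin d, iteratedFDeriv ℝ 2 v y
        ![EuclideanSpace.single i 1, EuclideanSpace.single i 1]) +
      ⟪b y, gradient v y⟫) :
    (∀ x ∈ ball (0 : EuclideanSpace ℝ (Fin d)) 1, x ≠ 0 →
        Lv x = -2 * d + 2 * c ∧ (0 : ℝ) ≤ -2 * d + 2 * c) ∧
    (∀ x ∈ sphere (0 : EuclideanSpace ℝ (Fin d)) 1, v x = 0) ∧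
    (v 0 = 1 ∧ (0 : ℝ) < 1) ∧
    (∀ x ∈ ball (0 : EuclideanSpace ℝ (Fin d)) 1 \ {0}, max (-(Lv x)) 0 = 0) ∧
    (∀ N p : ℝ, 1 ≤ p →
      ¬ (v 0 ≤ sSup (v '' sphere (0 : EuclideanSpace ℝ (Fin d)) 1) +
          N * (∫ y in ball (0 : EuclideanSpace ℝ (Fin d)) 1,
            (max (-(Lv y)) 0) ^ p) ^ (1 / p))) := by
  subst hv
  have hLv_eq (x : EuclideanSpace ℝ (Fin d)) (hx : x ≠ 0) : Lv x = -2 * d + 2 * c := by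
    simp only [hLv, sum_iteratedFDeriv_two_one_sub_norm_sq_single, gradient_one_sub_norm_sq,
      hb x hx, inner_neg_div_norm_sq_smul_smul_self hx, Fintype.card_fin]
    ring
  have hLv_neg_part (x : EuclideanSpace ℝ (Fin d)) (hx : x ≠ 0) : max (-(Lv x)) 0 = 0 := by
    rw [hLv_eq x hx]
    exact max_eq_right (by linarith)
  have hv_sphere (x : EuclideanSpace ℝ (Fin d)) (hx : x ∈ sphere 0 1) : 1 - ‖x‖ ^ 2 = 0 := by
    rw [mem_sphere_zero_iff_norm] at hx
    simp [hx]
  refine ⟨fun x _ hx => ⟨hLv_eq x hx, by linarith⟩, hv_sphere, ⟨by simp, one_pos⟩,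
    fun x hx => hLv_neg_part x hx.2, fun N p hp hineq => ?_⟩
  -- `d ≥ 1` is what makes `{0}` a null set for the volume
  have : Nonempty (Fin d) := ⟨⟨0, hd⟩⟩
  have hint : ∫ y in ball (0 : EuclideanSpace ℝ (Fin d)) 1, max (-(Lv y)) 0 ^ p = 0 :=
    setIntegral_eq_zero_of_forall_ne 0 fun y _ hy => by
      rw [hLv_neg_part y hy, Real.zero_rpow (by positivity)]
  have hsup : sSup ((fun x => 1 - ‖x‖ ^ 2) '' sphere (0 : EuclideanSpace ℝ (Fin d)) 1) ≤ 0 :=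
    Real.sSup_nonpos (by rintro _ ⟨x, hx, rfl⟩; exact (hv_sphere x hx).le)
  rw [hint, Real.zero_rpow (by positivity), mul_zero, add_zero] at hineq
  have hv0 : 1 - ‖(0 : EuclideanSpace ℝ (Fin d))‖ ^ 2 = 1 := by simp
  linarith
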